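/- arXiv:2305.16694 — 8 statements merged into one kernel-verified Lean document; each statement's English description precedes it below -/
import Mathlib

section
/- In the persuasion platform problem with user distribution x ∈ Δ(Θ) and sender lying probability p(x), the sender's expected utility U_S(p;x) = Σ_j x_j · 1[p(x) ≤ τ_{θ_j}] · (μ + (1-μ)p(x)) equals the producer surplus W_S(φ(π);π) = φ(π) · Σ_j π_j · 1[φ(π) ≤ v_j] in the equivalent market segmentation problem, where π = x and φ(π) = μ + (1-μ)p(x). -/
open Finset

/-- The sender's expected utility in the persuasion platform problem
equals the producer surplus in the equivalent market segmentation problem, where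
`π = x` and `φ(π) = μ + (1-μ)p(x)`, `v_j = μ(1+θ_j)`. -/
theorem stmt2 (n : ℕ) (θ : Fin n → ℝ) (μ : ℝ) (x : Fin n → ℝ) (p : ℝ)
    (hθpos : ∀ j, 0 < θ j) (hθmono : StrictMono θ)
    (hμ0 : 0 < μ) (hμ1 : μ < 1)
    (hx : ∀ j, 0 ≤ x j) (hx1 : ∑ j, x j = 1)
    (hp0 : 0 ≤ p) (hp1 : p ≤ 1) :
    ∑ j, x j * (if p ≤ μ / (1 - μ) * θ j then (1 : ℝ) else 0) * (μ + (1 - μ) * p)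
      = (μ + (1 - μ) * p) *
          ∑ j, x j * (if μ + (1 - μ) * p ≤ μ * (1 + θ j) then (1 : ℝ) else 0) := by
  have h1μ : (0:ℝ) < 1 - μ := by linarith
  rw [Finset.mul_sum]
  apply Finset.sum_congr rfl
  intro j _
  have hiff : (p ≤ μ / (1 - μ) * θ j) ↔ (μ + (1 - μ) * p ≤ μ * (1 + θ j)) := by
    rw [div_mul_eq_mul_div, le_div_iff₀ h1μ]
    constructor <;> intro h <;> nlinarith
  by_cases h : p ≤ μ / (1 - μ) * θ j
  · simp [h, hiff.mp h]; ring
  · simp [h, hiff.not.mp h]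
end

section
/- For any user distribution x ∈ Δ(Θ), the set argmax_{p ∈ [0,1]} U_S(p;x) contains at least one element of the finite set {τ_{θ_1}, ..., τ_{θ_n}} ∩ [0,1]; moreover any maximizer must be of this form, i.e., any optimal sender strategy p* satisfies p*(x) ∈ {τ_θ : θ ∈ Θ}. -/
open Finset

/-- The sender's expected utility from lying probability `p` against user distribution `x`. -/
noncomputable def US (n : ℕ) (θ : Fin n → ℝ) (μ : ℝ) (x : Fin n → ℝ) (p : ℝ) : ℝ :=
  ∑ j, x j * (if p ≤ μ / (1 - μ) * θ j then (1 : ℝ) else 0) * (μ + (1 - μ) * p)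

/-- For any user distribution `x`, some persuasion threshold `τ_{θ_j}` maximizes
the sender's utility over `p ∈ [0,1]`, and moreover any maximizer over `[0,1]` is of the
form `τ_{θ_j}` for some `j`. -/
theorem stmt4 (n : ℕ) (hn : 0 < n) (θ : Fin n → ℝ) (μ : ℝ) (x : Fin n → ℝ)
    (hθpos : ∀ j, 0 < θ j) (hθmono : StrictMono θ)
    (hμ0 : 0 < μ) (hμ1 : μ < 1)
    (hτ : ∀ j, μ / (1 - μ) * θ j ≤ 1)
    (hx : ∀ j, 0 ≤ x j) (hx1 : ∑ j, x j = 1) :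
    (∃ j : Fin n, ∀ p ∈ Set.Icc (0 : ℝ) 1,
        US n θ μ x p ≤ US n θ μ x (μ / (1 - μ) * θ j)) ∧
      ∀ p ∈ Set.Icc (0 : ℝ) 1,
        (∀ q ∈ Set.Icc (0 : ℝ) 1, US n θ μ x q ≤ US n θ μ x p) →
          ∃ j : Fin n, p = μ / (1 - μ) * θ j := by
  have h1μ : 0 < 1 - μ := by linarith
  have hdivpos : 0 < μ / (1 - μ) := div_pos hμ0 h1μ
  have hτpos : ∀ j, 0 < μ / (1 - μ) * θ j := fun j => mul_pos hdivpos (hθpos j)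
  have hUS : ∀ p, US n θ μ x p =
      (∑ j ∈ univ.filter (fun j => p ≤ μ / (1 - μ) * θ j), x j) * (μ + (1 - μ) * p) := by
    intro p
    rw [US, Finset.sum_filter, Finset.sum_mul]
    refine Finset.sum_congr rfl fun j _ => ?_
    by_cases h : p ≤ μ / (1 - μ) * θ j <;> simp [h]
  have hcpos : ∀ p : ℝ, 0 ≤ p → 0 < μ + (1 - μ) * p := fun p hp => by nlinarith
  have hsumnn : ∀ (s : Finset (Fin n)), 0 ≤ ∑ j ∈ s, x j := fun s =>
    Finset.sum_nonneg fun j _ => hx j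
  have hUSnn : ∀ j, 0 ≤ US n θ μ x (μ / (1 - μ) * θ j) := by
    intro j
    rw [hUS]
    exact mul_nonneg (hsumnn _) (hcpos _ (hτpos j).le).le
  -- key dominance facts
  have key : ∀ p ∈ Set.Icc (0:ℝ) 1,
      ∀ h : (univ.filter (fun j => p ≤ μ / (1 - μ) * θ j)).Nonempty,
      p ≤ μ / (1 - μ) * θ (Finset.min' _ h) ∧
      (univ.filter (fun j => p ≤ μ / (1 - μ) * θ j)) ⊆
        (univ.filter (fun j => μ / (1 - μ) * θ (Finset.min' _ h) ≤ μ / (1 - μ) * θ j)) ∧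
      US n θ μ x p ≤ US n θ μ x (μ / (1 - μ) * θ (Finset.min' _ h)) := by
    intro p hp h
    set F := univ.filter (fun j => p ≤ μ / (1 - μ) * θ j) with hF
    set j0 := F.min' h with hj0
    have hj0F : j0 ∈ F := Finset.min'_mem F h
    have hpj0 : p ≤ μ / (1 - μ) * θ j0 := (Finset.mem_filter.mp hj0F).2
    have hsub : F ⊆ univ.filter (fun j => μ / (1 - μ) * θ j0 ≤ μ / (1 - μ) * θ j) := by
      intro k hk
      simp only [Finset.mem_filter, Finset.mem_univ, true_and]
      exact mul_le_mul_of_nonneg_left (hθmono.monotone (Finset.min'_le F k hk)) hdivpos.le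
    refine ⟨hpj0, hsub, ?_⟩
    rw [hUS, hUS]
    apply mul_le_mul
    · exact Finset.sum_le_sum_of_subset_of_nonneg hsub (fun j _ _ => hx j)
    · nlinarith
    · exact (hcpos p hp.1).le
    · exact hsumnn _
  obtain ⟨jm, -, hjm⟩ := Finset.exists_max_image univ
    (fun j => US n θ μ x (μ / (1 - μ) * θ j)) ⟨⟨0, hn⟩, Finset.mem_univ _⟩
  constructor
  · refine ⟨jm, fun p hp => ?_⟩
    by_cases h : (univ.filter (fun j => p ≤ μ / (1 - μ) * θ j)).Nonempty
    · obtain ⟨-, -, hle⟩ := key p hp h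
      exact le_trans hle (hjm _ (Finset.mem_univ _))
    · rw [Finset.not_nonempty_iff_eq_empty] at h
      rw [hUS, h, Finset.sum_empty, zero_mul]
      exact hUSnn jm
  · intro p hp hmax
    have h0 : US n θ μ x 0 = μ := by
      rw [hUS]
      rw [Finset.filter_true_of_mem (fun j _ => (hτpos j).le)]
      rw [hx1]; ring
    have hμle : μ ≤ US n θ μ x p := by
      have := hmax 0 ⟨le_refl 0, zero_le_one⟩
      rwa [h0] at this
    have hUSp := hUS p
    have hsumpos : 0 < ∑ j ∈ univ.filter (fun j => p ≤ μ / (1 - μ) * θ j), x j := by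
      by_contra hc
      push_neg at hc
      nlinarith [hcpos p hp.1]
    have hne : (univ.filter (fun j => p ≤ μ / (1 - μ) * θ j)).Nonempty := by
      by_contra hc
      rw [Finset.not_nonempty_iff_eq_empty] at hc
      rw [hc, Finset.sum_empty] at hsumpos
      exact lt_irrefl _ hsumpos
    obtain ⟨hpj0, hsub, hle⟩ := key p hp hne
    set j0 := Finset.min' _ hne with hj0
    refine ⟨j0, ?_⟩
    by_contra hneq
    have hlt : p < μ / (1 - μ) * θ j0 := lt_of_le_of_ne hpj0 hneq
    have hstrict : US n θ μ x p < US n θ μ x (μ / (1 - μ) * θ j0) := by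
      rw [hUS p, hUS (μ / (1 - μ) * θ j0)]
      calc (∑ j ∈ univ.filter (fun j => p ≤ μ / (1 - μ) * θ j), x j) * (μ + (1 - μ) * p)
          < (∑ j ∈ univ.filter (fun j => p ≤ μ / (1 - μ) * θ j), x j) *
            (μ + (1 - μ) * (μ / (1 - μ) * θ j0)) := by
            apply mul_lt_mul_of_pos_left _ hsumpos
            nlinarith
        _ ≤ (∑ j ∈ univ.filter (fun j => μ / (1 - μ) * θ j0 ≤ μ / (1 - μ) * θ j), x j) *
            (μ + (1 - μ) * (μ / (1 - μ) * θ j0)) := by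
            apply mul_le_mul_of_nonneg_right
              (Finset.sum_le_sum_of_subset_of_nonneg hsub (fun j _ _ => hx j))
              (hcpos _ (hτpos j0).le).le
    have hback : US n θ μ x (μ / (1 - μ) * θ j0) ≤ US n θ μ x p :=
      hmax _ ⟨(hτpos j0).le, hτ j0⟩
    linarith
end

section
/- Let σ be a Bayes-plausible platform policy with truthful posterior x^T. The truthful strategy p_T is a best response for the sender (i.e., σ is incentive-compatible) if and only if for all k ∈ [n]: V(σ) ≥ ((1-δ)/δ)·((μ/(1-μ))·(F_k(x^T) - 1)/(F_k(x^T)·p_k) + 1) + ū, where F_k(x^T) = Σ_{j=k}^n x^T_j, p_k = τ_{θ_k}, and V(σ) is the sender's per-period utility under truthful play. -/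
open Finset

/-- Incentive-compatibility characterization. With `F_k(x^T) = Σ_{j≥k} x^T_j`
and `p_k = (μ/(1-μ))θ_k`, the truthful strategy is a best response (no deviation to lying
probability `p_k` at the truthful posterior is profitable) iff for all `k`:
`V(σ) ≥ ((1-δ)/δ)·((μ/(1-μ))·(F_k(x^T)-1)/(F_k(x^T)p_k) + 1) + ū`. -/
theorem stmt5 (n : ℕ) (θ : Fin n → ℝ) (μ δ ubar V : ℝ) (xT : Fin n → ℝ)
    (hθpos : ∀ j, 0 < θ j) (hμ0 : 0 < μ) (hμ1 : μ < 1)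
    (hδ0 : 0 < δ) (hδ1 : δ < 1)
    (hxT : ∀ j, 0 ≤ xT j) (hxT1 : ∑ j, xT j = 1)
    (hF : ∀ k : Fin n, 0 < ∑ j ∈ Finset.univ.filter (fun j => k ≤ j), xT j) :
    (∀ k : Fin n,
        (1 - δ) * μ + δ * V ≥
          (1 - δ) * (∑ j ∈ Finset.univ.filter (fun j => k ≤ j), xT j) *
              (μ + (1 - μ) * (μ / (1 - μ) * θ k))
            + δ * (1 - μ) * (∑ j ∈ Finset.univ.filter (fun j => k ≤ j), xT j) *
                (μ / (1 - μ) * θ k) * ubar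
            + δ * (1 - (1 - μ) * (∑ j ∈ Finset.univ.filter (fun j => k ≤ j), xT j) *
                (μ / (1 - μ) * θ k)) * V) ↔
      (∀ k : Fin n,
        V ≥ (1 - δ) / δ *
              (μ / (1 - μ) *
                (((∑ j ∈ Finset.univ.filter (fun j => k ≤ j), xT j) - 1) /
                  ((∑ j ∈ Finset.univ.filter (fun j => k ≤ j), xT j) *
                    (μ / (1 - μ) * θ k))) + 1) + ubar) := by
  have h1μ : (0:ℝ) < 1 - μ := by linarith
  refine forall_congr' fun k => ?_
  set F := ∑ j ∈ Finset.univ.filter (fun j => k ≤ j), xT j with hFdef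
  have hF' : 0 < F := hF k
  have hθ' := hθpos k
  set p := μ / (1 - μ) * θ k with hpdef
  have hp : 0 < p := by positivity
  have key : (1 - δ) * μ + δ * V -
      ((1 - δ) * F * (μ + (1 - μ) * p) + δ * (1 - μ) * F * p * ubar
        + δ * (1 - (1 - μ) * F * p) * V)
      = δ * (1 - μ) * F * p *
        (V - ((1 - δ) / δ * (μ / (1 - μ) * ((F - 1) / (F * p)) + 1) + ubar)) := by
    field_simp
    ring
  have hc : 0 < δ * (1 - μ) * F * p := by positivity
  constructor <;> intro h <;> rw [ge_iff_le, ← sub_nonneg] at h ⊢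
  · have h2 : 0 ≤ δ * (1 - μ) * F * p *
        (V - ((1 - δ) / δ * (μ / (1 - μ) * ((F - 1) / (F * p)) + 1) + ubar)) := by
      rw [← key]; linarith
    exact nonneg_of_mul_nonneg_right h2 hc
  · rw [key]
    positivity
end

section
/- Let λ ∈ (0,1), and let x^T, x^F ∈ Δ(Θ) with W_T := Σ_j x^T_j·u_j > μ where u_j = μ + (1-μ)p_j > μ for all j (since p_j > 0). Let W_F := Σ_j x^F_j·u_j. Then for α^T ∈ (0,1) and ε ∈ (0,1) with λ = εα^T/(1-α^T+εα^T), the inequality (1-ε)α^T·μ + (1-(1-ε)α^T)·(λW_T + (1-λ)W_F) > α^T·μ + (1-α^T)·W_F holds. -/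
open Finset

/-- Key computation of Lemma 5. With `u_j = μ + (1-μ)p_j`,
`W_T = Σ_j x^T_j u_j > μ`, `W_F = Σ_j x^F_j u_j`, `α^T, ε ∈ (0,1)` and
`λ = εα^T/(1-α^T+εα^T)`, we have
`(1-ε)α^T μ + (1-(1-ε)α^T)(λW_T + (1-λ)W_F) > α^T μ + (1-α^T)W_F`. -/
theorem stmt8 (n : ℕ) (μ αT ε lam : ℝ) (p : Fin n → ℝ) (xT xF : Fin n → ℝ)
    (hμ0 : 0 < μ) (hμ1 : μ < 1) (hp : ∀ j, 0 < p j)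
    (hxT : ∀ j, 0 ≤ xT j) (hxT1 : ∑ j, xT j = 1)
    (hxF : ∀ j, 0 ≤ xF j) (hxF1 : ∑ j, xF j = 1)
    (hαT : αT ∈ Set.Ioo (0 : ℝ) 1) (hε : ε ∈ Set.Ioo (0 : ℝ) 1)
    (hlam : lam = ε * αT / (1 - αT + ε * αT))
    (hWT : μ < ∑ j, xT j * (μ + (1 - μ) * p j)) :
    αT * μ + (1 - αT) * (∑ j, xF j * (μ + (1 - μ) * p j)) <
      (1 - ε) * αT * μ + (1 - (1 - ε) * αT) *
        (lam * (∑ j, xT j * (μ + (1 - μ) * p j))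
          + (1 - lam) * (∑ j, xF j * (μ + (1 - μ) * p j))) := by
  obtain ⟨ha0, ha1⟩ := hαT
  obtain ⟨he0, he1⟩ := hε
  set WT := ∑ j, xT j * (μ + (1 - μ) * p j)
  set WF := ∑ j, xF j * (μ + (1 - μ) * p j)
  have hD : (0:ℝ) < 1 - αT + ε * αT := by nlinarith
  have hDne : (1 - αT + ε * αT) ≠ 0 := ne_of_gt hD
  have hlamD : lam * (1 - αT + ε * αT) = ε * αT := by
    rw [hlam]; field_simp
  have h1 : 1 - (1 - ε) * αT = 1 - αT + ε * αT := by ring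
  have key : (1 - (1 - ε) * αT) * (lam * WT + (1 - lam) * WF)
      = ε * αT * WT + (1 - αT) * WF := by
    rw [h1]; linear_combination (WT - WF) * hlamD
  nlinarith [mul_pos (mul_pos he0 ha0) (sub_pos.mpr hWT)]
end

section
/- For any lowest-type-targeting platform policy σ, the sum of sender and platform utilities under truthful play equals μ·(1 + Σ_{j=1}^n x*_j·θ_j), and for an arbitrary Bayes-plausible policy σ' the sum U_P(σ', p_T) + U_S(σ', p_T) is at most μ·(1 + Σ_{j=1}^n x*_j·θ_j). -/
open Finset

lemma combined (n m : ℕ) (θ : Fin n → ℝ) (μ αT : ℝ)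
    (α : Fin m → ℝ) (xT : Fin n → ℝ) (x : Fin m → Fin n → ℝ)
    (pstar : (Fin n → ℝ) → ℝ) :
    (αT * μ + ∑ i, α i * ∑ j, x i j *
      (if pstar (x i) ≤ μ / (1 - μ) * θ j then (1 : ℝ) else 0) * (μ + (1 - μ) * pstar (x i)))
    + (αT * μ * (∑ j, xT j * θ j) + ∑ i, α i * ∑ j, x i j *
      (if pstar (x i) ≤ μ / (1 - μ) * θ j then (1 : ℝ) else 0) *
        (μ * θ j - (1 - μ) * pstar (x i)))
    = αT * μ * (1 + ∑ j, xT j * θ j) + ∑ i, α i * ∑ j, x i j *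
      (if pstar (x i) ≤ μ / (1 - μ) * θ j then (1 : ℝ) else 0) * (μ * (1 + θ j)) := by
  have h : ∀ i : Fin m,
      α i * ∑ j, x i j * (if pstar (x i) ≤ μ / (1 - μ) * θ j then (1 : ℝ) else 0) *
        (μ + (1 - μ) * pstar (x i))
      + α i * ∑ j, x i j * (if pstar (x i) ≤ μ / (1 - μ) * θ j then (1 : ℝ) else 0) *
        (μ * θ j - (1 - μ) * pstar (x i))
      = α i * ∑ j, x i j * (if pstar (x i) ≤ μ / (1 - μ) * θ j then (1 : ℝ) else 0) *
        (μ * (1 + θ j)) := by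
    intro i
    rw [← mul_add, ← Finset.sum_add_distrib]
    congr 1
    apply Finset.sum_congr rfl
    intro j _
    ring
  calc _ = αT * μ * (1 + ∑ j, xT j * θ j)
        + ∑ i, (α i * ∑ j, x i j * (if pstar (x i) ≤ μ / (1 - μ) * θ j then (1 : ℝ) else 0) *
            (μ + (1 - μ) * pstar (x i))
          + α i * ∑ j, x i j * (if pstar (x i) ≤ μ / (1 - μ) * θ j then (1 : ℝ) else 0) *
            (μ * θ j - (1 - μ) * pstar (x i))) := by
        rw [Finset.sum_add_distrib]; ring
    _ = _ := by rw [Finset.sum_congr rfl (fun i _ => h i)]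

lemma total (n m : ℕ) (θ : Fin n → ℝ) (μ αT : ℝ) (xstar : Fin n → ℝ)
    (α : Fin m → ℝ) (xT : Fin n → ℝ) (x : Fin m → Fin n → ℝ)
    (hsum : αT + ∑ i, α i = 1)
    (hBP : ∀ j, αT * xT j + ∑ i, α i * x i j = xstar j) :
    αT * μ * (1 + ∑ j, xT j * θ j) + ∑ i, α i * (μ * (1 + ∑ j, x i j * θ j))
      = μ * (1 + ∑ j, xstar j * θ j) := by
  have h1 : ∑ j, xstar j * θ j
      = αT * ∑ j, xT j * θ j + ∑ i, α i * ∑ j, x i j * θ j := by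
    simp only [← hBP, add_mul, Finset.sum_add_distrib, Finset.sum_mul, Finset.mul_sum]
    rw [Finset.sum_comm]
    simp [mul_assoc]
  have h2 : ∑ i, α i * (μ * (1 + ∑ j, x i j * θ j))
      = μ * ∑ i, α i + μ * ∑ i, α i * ∑ j, x i j * θ j := by
    rw [Finset.mul_sum, Finset.mul_sum, ← Finset.sum_add_distrib]
    apply Finset.sum_congr rfl
    intro i _
    ring
  rw [h1, h2]
  have h3 : ∑ i, α i = 1 - αT := by linarith
  rw [h3]; ring

open Finset

/-- Sender's utility under truthful play, for a policy given by truthful weight `αT`,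
non-truthful weights `α` and posteriors `x`, when the sender lies with probability
`pstar (x i)` at posterior `x i`. -/
noncomputable def USpol (n m : ℕ) (θ : Fin n → ℝ) (μ αT : ℝ)
    (α : Fin m → ℝ) (x : Fin m → Fin n → ℝ) (pstar : (Fin n → ℝ) → ℝ) : ℝ :=
  αT * μ + ∑ i, α i * ∑ j, x i j *
    (if pstar (x i) ≤ μ / (1 - μ) * θ j then (1 : ℝ) else 0) * (μ + (1 - μ) * pstar (x i))

/-- Platform's utility (average user utility) under truthful play. -/
noncomputable def UPpol (n m : ℕ) (θ : Fin n → ℝ) (μ αT : ℝ)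
    (α : Fin m → ℝ) (xT : Fin n → ℝ) (x : Fin m → Fin n → ℝ)
    (pstar : (Fin n → ℝ) → ℝ) : ℝ :=
  αT * μ * (∑ j, xT j * θ j) + ∑ i, α i * ∑ j, x i j *
    (if pstar (x i) ≤ μ / (1 - μ) * θ j then (1 : ℝ) else 0) *
      (μ * θ j - (1 - μ) * pstar (x i))

/-- For any lowest-type-targeting policy, the sum of sender and platform
utilities under truthful play equals `μ(1 + Σ_j x*_j θ_j)`; for an arbitrary Bayes-plausible
policy the sum is at most `μ(1 + Σ_j x*_j θ_j)`. -/
theorem stmt11 (n m m' : ℕ) (θ : Fin n → ℝ) (μ : ℝ) (xstar : Fin n → ℝ)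
    (pstar : (Fin n → ℝ) → ℝ)
    (hθpos : ∀ j, 0 < θ j) (hθmono : StrictMono θ) (hμ0 : 0 < μ) (hμ1 : μ < 1)
    -- the lowest-type-targeting policy σ
    (αT : ℝ) (α : Fin m → ℝ) (xT : Fin n → ℝ) (x : Fin m → Fin n → ℝ)
    (hαT : 0 ≤ αT) (hα : ∀ i, 0 ≤ α i) (hsum : αT + ∑ i, α i = 1)
    (hxT : ∀ j, 0 ≤ xT j) (hxT1 : ∑ j, xT j = 1)
    (hx : ∀ i j, 0 ≤ x i j) (hx1 : ∀ i, ∑ j, x i j = 1)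
    (hBP : ∀ j, αT * xT j + ∑ i, α i * x i j = xstar j)
    (hltt : ∀ i, ∃ j : Fin n, 0 < x i j ∧ (∀ k, 0 < x i k → j ≤ k) ∧
      pstar (x i) = μ / (1 - μ) * θ j)
    -- an arbitrary Bayes-plausible policy σ'
    (αT' : ℝ) (α' : Fin m' → ℝ) (xT' : Fin n → ℝ) (x' : Fin m' → Fin n → ℝ)
    (hαT' : 0 ≤ αT') (hα' : ∀ i, 0 ≤ α' i) (hsum' : αT' + ∑ i, α' i = 1)
    (hxT' : ∀ j, 0 ≤ xT' j) (hxT1' : ∑ j, xT' j = 1)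
    (hx' : ∀ i j, 0 ≤ x' i j) (hx1' : ∀ i, ∑ j, x' i j = 1)
    (hBP' : ∀ j, αT' * xT' j + ∑ i, α' i * x' i j = xstar j) :
    USpol n m θ μ αT α x pstar + UPpol n m θ μ αT α xT x pstar
        = μ * (1 + ∑ j, xstar j * θ j) ∧
      USpol n m' θ μ αT' α' x' pstar + UPpol n m' θ μ αT' α' xT' x' pstar
        ≤ μ * (1 + ∑ j, xstar j * θ j) := by
  have hc : 0 < μ / (1 - μ) := div_pos hμ0 (by linarith)
  constructor
  · show (αT * μ + ∑ i, α i * ∑ j, x i j *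
        (if pstar (x i) ≤ μ / (1 - μ) * θ j then (1 : ℝ) else 0) * (μ + (1 - μ) * pstar (x i)))
      + (αT * μ * (∑ j, xT j * θ j) + ∑ i, α i * ∑ j, x i j *
        (if pstar (x i) ≤ μ / (1 - μ) * θ j then (1 : ℝ) else 0) *
          (μ * θ j - (1 - μ) * pstar (x i))) = _
    rw [combined]
    have key : ∀ i : Fin m, ∑ j, x i j *
        (if pstar (x i) ≤ μ / (1 - μ) * θ j then (1 : ℝ) else 0) * (μ * (1 + θ j))
        = μ * (1 + ∑ j, x i j * θ j) := by
      intro i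
      obtain ⟨j0, hj0pos, hj0min, hp⟩ := hltt i
      have h1 : ∀ j, x i j *
          (if pstar (x i) ≤ μ / (1 - μ) * θ j then (1 : ℝ) else 0) * (μ * (1 + θ j))
          = μ * x i j + μ * (x i j * θ j) := by
        intro j
        rcases (hx i j).lt_or_eq with hpos | hzero
        · rw [if_pos, mul_one]
          · ring
          · rw [hp]
            exact mul_le_mul_of_nonneg_left (hθmono.monotone (hj0min j hpos)) hc.le
        · rw [← hzero]; ring
      rw [Finset.sum_congr rfl (fun j _ => h1 j), Finset.sum_add_distrib,
        ← Finset.mul_sum, ← Finset.mul_sum, hx1 i]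
      ring
    rw [show (∑ i, α i * ∑ j, x i j *
        (if pstar (x i) ≤ μ / (1 - μ) * θ j then (1 : ℝ) else 0) * (μ * (1 + θ j)))
        = ∑ i, α i * (μ * (1 + ∑ j, x i j * θ j)) from
      Finset.sum_congr rfl (fun i _ => by rw [key i])]
    exact total n m θ μ αT xstar α xT x hsum hBP
  · show (αT' * μ + ∑ i, α' i * ∑ j, x' i j *
        (if pstar (x' i) ≤ μ / (1 - μ) * θ j then (1 : ℝ) else 0) * (μ + (1 - μ) * pstar (x' i)))
      + (αT' * μ * (∑ j, xT' j * θ j) + ∑ i, α' i * ∑ j, x' i j *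
        (if pstar (x' i) ≤ μ / (1 - μ) * θ j then (1 : ℝ) else 0) *
          (μ * θ j - (1 - μ) * pstar (x' i))) ≤ _
    rw [combined, ← total n m' θ μ αT' xstar α' xT' x' hsum' hBP']
    gcongr with i _
    · exact hα' i
    have h1 : ∀ j, x' i j *
        (if pstar (x' i) ≤ μ / (1 - μ) * θ j then (1 : ℝ) else 0) * (μ * (1 + θ j))
        ≤ μ * x' i j + μ * (x' i j * θ j) := by
      intro j
      have hθj := hθpos j
      have hxij := hx' i j
      have k1 := mul_nonneg hμ0.le hxij
      have k2 := mul_nonneg k1 hθj.le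
      split
      · nlinarith
      · nlinarith
    calc ∑ j, x' i j * (if pstar (x' i) ≤ μ / (1 - μ) * θ j then (1 : ℝ) else 0) * (μ * (1 + θ j))
        ≤ ∑ j, (μ * x' i j + μ * (x' i j * θ j)) := Finset.sum_le_sum (fun j _ => h1 j)
      _ = μ * (1 + ∑ j, x' i j * θ j) := by
          rw [Finset.sum_add_distrib, ← Finset.mul_sum, ← Finset.mul_sum, hx1' i]; ring
end

section
/- Let x ∈ Δ(Θ) with optimal sender lying probability p*(x) = (μ/(1-μ))θ_j for some index j with j > min{i : x_i > 0}. Split x into y = (1/F_j(x))·(0,...,0,x_j,...,x_n) and z = (1/(1-F_j(x)))·(x_1,...,x_{j-1},0,...,0), where F_j(x) = Σ_{k=j}^n x_k. Then the optimal sender lying probability on y equals p*(x), and the optimal sender lying probability on z is strictly less than p*(x). -/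
/-!
Below `j`, the conditional distribution `y` puts its whole mass above every index, so its
revenue there is `μ(1 + θ_l)`, increasing in `l`; from `j` on, `y` is `x` rescaled by `1/F`,
so `j` stays optimal. The conditional distribution `z` has no mass from `j` on, hence zero
revenue there, while its revenue at `jmin` is positive: its optimum lies strictly below `j`.
-/

open Finset

/-- The sender's revenue from targeting the persuasion threshold of type `θ l` against
distribution `w`: `(μ + (1-μ)p_l)·Σ_{k≥l} w_k` with `p_l = (μ/(1-μ))θ_l`. -/
noncomputable def R (n : ℕ) (θ : Fin n → ℝ) (μ : ℝ) (w : Fin n → ℝ) (l : Fin n) : ℝ :=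
  (μ + (1 - μ) * (μ / (1 - μ) * θ l)) * ∑ k ∈ Finset.univ.filter (fun k => l ≤ k), w k

/-- `l` is the optimal targeting index for `w` (ties broken toward the lowest index). -/
noncomputable def OptIdx (n : ℕ) (θ : Fin n → ℝ) (μ : ℝ) (w : Fin n → ℝ) (l : Fin n) : Prop :=
  (∀ k, R n θ μ w k ≤ R n θ μ w l) ∧ (∀ k, R n θ μ w k = R n θ μ w l → l ≤ k)

section Splitting

variable {n : ℕ}

def tailMass (w : Fin n → ℝ) (l : Fin n) : ℝ := ∑ k ∈ univ.filter (l ≤ ·), w k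

noncomputable def upperSplit (x : Fin n → ℝ) (j : Fin n) (c : ℝ) (k : Fin n) : ℝ :=
  if j ≤ k then x k / c else 0

noncomputable def lowerSplit (x : Fin n → ℝ) (j : Fin n) (c : ℝ) (k : Fin n) : ℝ :=
  if k < j then x k / c else 0

theorem tailMass_upperSplit (x : Fin n → ℝ) (j : Fin n) (c : ℝ) (l : Fin n) :
    tailMass (upperSplit x j c) l = tailMass x (max l j) / c := by
  simp only [tailMass, upperSplit, ← sum_filter, filter_filter, max_le_iff, sum_div]

theorem tailMass_lowerSplit (x : Fin n → ℝ) (j : Fin n) (c : ℝ) (l : Fin n) :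
    tailMass (lowerSplit x j c) l = (∑ k ∈ Ico l j, x k) / c := by
  simp only [tailMass, lowerSplit, ← sum_filter, filter_filter, sum_div]
  congr 1
  ext k
  simp

variable {θ : Fin n → ℝ} {μ : ℝ}

theorem R_eq_mul_tailMass (hμ : μ ≠ 1) (w : Fin n → ℝ) (l : Fin n) :
    R n θ μ w l = μ * (1 + θ l) * tailMass w l := by
  have : 1 - μ ≠ 0 := sub_ne_zero.mpr hμ.symm
  rw [R, tailMass]
  field_simp

theorem R_upperSplit_of_le {x : Fin n → ℝ} {j l : Fin n} (c : ℝ) (hl : j ≤ l) :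
    R n θ μ (upperSplit x j c) l = R n θ μ x l / c := by
  rw [R, R, ← tailMass, ← tailMass, tailMass_upperSplit, max_eq_left hl, mul_div_assoc]

theorem R_upperSplit_tailMass_of_le (hμ : μ ≠ 1) {x : Fin n → ℝ} {j l : Fin n}
    (hx : tailMass x j ≠ 0) (hl : l ≤ j) :
    R n θ μ (upperSplit x j (tailMass x j)) l = μ * (1 + θ l) := by
  rw [R_eq_mul_tailMass hμ, tailMass_upperSplit, max_eq_right hl, div_self hx, mul_one]

theorem optIdx_upperSplit (hμ0 : 0 < μ) (hμ1 : μ < 1) (hθ : StrictMono θ) {x : Fin n → ℝ}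
    {j : Fin n} (hx : 0 < tailMass x j) (hopt : OptIdx n θ μ x j) :
    OptIdx n θ μ (upperSplit x j (tailMass x j)) j := by
  have hlow : ∀ k < j, R n θ μ (upperSplit x j (tailMass x j)) k
      < R n θ μ (upperSplit x j (tailMass x j)) j := by
    intro k hk
    rw [R_upperSplit_tailMass_of_le hμ1.ne hx.ne' hk.le,
      R_upperSplit_tailMass_of_le hμ1.ne hx.ne' le_rfl]
    gcongr
    exact hθ hk
  refine ⟨fun k => ?_, fun k hk => not_lt.mp fun hkj => (hlow k hkj).ne hk⟩
  rcases lt_or_ge k j with hkj | hjk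
  · exact (hlow k hkj).le
  · rw [R_upperSplit_of_le _ hjk, R_upperSplit_of_le _ le_rfl]
    exact div_le_div_of_nonneg_right (hopt.1 k) hx.le

theorem R_lowerSplit_of_le (x : Fin n → ℝ) {j l : Fin n} (c : ℝ) (hl : j ≤ l) :
    R n θ μ (lowerSplit x j c) l = 0 := by
  rw [R, ← tailMass, tailMass_lowerSplit, Ico_eq_empty_of_le hl, sum_empty, zero_div, mul_zero]

theorem R_lowerSplit_pos (hμ0 : 0 < μ) (hμ1 : μ < 1) (hθ : ∀ l, 0 < θ l) {x : Fin n → ℝ}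
    (hx : ∀ k, 0 ≤ x k) {i j : Fin n} (hi : 0 < x i) (hij : i < j) {c : ℝ} (hc : 0 < c) :
    0 < R n θ μ (lowerSplit x j c) i := by
  rw [R_eq_mul_tailMass hμ1.ne, tailMass_lowerSplit]
  have hmass : x i ≤ ∑ k ∈ Ico i j, x k := single_le_sum (fun k _ => hx k) (left_mem_Ico.mpr hij)
  have := hθ i
  exact mul_pos (by positivity) (div_pos (hi.trans_le hmass) hc)

theorem lt_of_optIdx_lowerSplit {x : Fin n → ℝ} {i j l : Fin n} {c : ℝ}
    (hpos : 0 < R n θ μ (lowerSplit x j c) i) (hopt : OptIdx n θ μ (lowerSplit x j c) l) :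
    l < j :=
  not_le.mp fun hjl => (hpos.trans_le (hopt.1 i)).ne' (R_lowerSplit_of_le x c hjl)

end Splitting

theorem stmt13_general (n : ℕ) (θ : Fin n → ℝ) (μ : ℝ) (x y z : Fin n → ℝ)
    (j jmin : Fin n) (F : ℝ)
    (hθpos : ∀ l, 0 < θ l) (hθmono : StrictMono θ) (hμ0 : 0 < μ) (hμ1 : μ < 1)
    (hx : ∀ k, 0 ≤ x k)
    (hjmin : 0 < x jmin) (hlt : jmin < j)
    (hF : F = ∑ k ∈ Finset.univ.filter (fun k => j ≤ k), x k)
    (hF0 : 0 < F) (hF1 : F < 1)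
    (hy : ∀ k, y k = if j ≤ k then x k / F else 0)
    (hz : ∀ k, z k = if k < j then x k / (1 - F) else 0)
    (hopt : OptIdx n θ μ x j) :
    OptIdx n θ μ y j ∧
      ∀ l, OptIdx n θ μ z l → μ / (1 - μ) * θ l < μ / (1 - μ) * θ j := by
  obtain rfl : y = upperSplit x j F := funext hy
  obtain rfl : z = lowerSplit x j (1 - F) := funext hz
  subst hF
  refine ⟨optIdx_upperSplit hμ0 hμ1 hθmono hF0 hopt, fun l hl => ?_⟩
  have hzpos := R_lowerSplit_pos hμ0 hμ1 hθpos hx hjmin hlt (sub_pos.mpr hF1)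
  have hq : 0 < μ / (1 - μ) := div_pos hμ0 (sub_pos.mpr hμ1)
  exact mul_lt_mul_of_pos_left (hθmono (lt_of_optIdx_lowerSplit hzpos hl)) hq

/-- Splitting construction. If the optimal lying probability on `x` is
`p_j = (μ/(1-μ))θ_j` with `j` strictly above the lowest index in the support of `x`, and
`x` is split into `y` (normalized restriction to indices `≥ j`) and `z` (normalized
restriction to indices `< j`), then the optimal lying probability on `y` equals `p_j` and
the optimal lying probability on `z` is strictly less than `p_j`. -/
theorem stmt13 (n : ℕ) (θ : Fin n → ℝ) (μ : ℝ) (x y z : Fin n → ℝ)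
    (j jmin : Fin n) (F : ℝ)
    (hθpos : ∀ l, 0 < θ l) (hθmono : StrictMono θ) (hμ0 : 0 < μ) (hμ1 : μ < 1)
    (hx : ∀ k, 0 ≤ x k) (hx1 : ∑ k, x k = 1)
    (hjmin : 0 < x jmin) (hjminle : ∀ k, 0 < x k → jmin ≤ k) (hlt : jmin < j)
    (hF : F = ∑ k ∈ Finset.univ.filter (fun k => j ≤ k), x k)
    (hF0 : 0 < F) (hF1 : F < 1)
    (hy : ∀ k, y k = if j ≤ k then x k / F else 0)
    (hz : ∀ k, z k = if k < j then x k / (1 - F) else 0)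
    (hopt : OptIdx n θ μ x j) :
    OptIdx n θ μ y j ∧
      ∀ l, OptIdx n θ μ z l → μ / (1 - μ) * θ l < μ / (1 - μ) * θ j :=
  stmt13_general n θ μ x y z j jmin F hθpos hθmono hμ0 hμ1 hx hjmin hlt hF hF0 hF1 hy hz hopt
end

section
/- With notation as in the splitting construction: replacing posterior x (weight σ(x)) by posteriors y and z with weights F_j(x)σ(x) and (1-F_j(x))σ(x) preserves Bayes-plausibility (i.e., F_j(x)·y + (1-F_j(x))·z = x) and strictly increases the sender's expected utility: F_j(x)·U_S(p*(y);y) + (1-F_j(x))·U_S(p*(z);z) > U_S(p*(x);x). -/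
open Finset

/-- The sender's one-shot utility from lying probability `p` against distribution `w`. -/
noncomputable def USone (n : ℕ) (θ : Fin n → ℝ) (μ : ℝ) (p : ℝ) (w : Fin n → ℝ) : ℝ :=
  ∑ k, w k * (if p ≤ μ / (1 - μ) * θ k then (1 : ℝ) else 0) * (μ + (1 - μ) * p)

section Revenue

variable {n : ℕ} {θ : Fin n → ℝ} {μ : ℝ}

lemma USone_eq_R (hμ0 : 0 < μ) (hμ1 : μ < 1) (hθmono : StrictMono θ) (w : Fin n → ℝ)
    (l : Fin n) : USone n θ μ (μ / (1 - μ) * θ l) w = R n θ μ w l := by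
  have hc : 0 < μ / (1 - μ) := div_pos hμ0 (by linarith)
  unfold USone R
  rw [sum_filter, mul_sum]
  refine sum_congr rfl fun k _ => ?_
  by_cases h : l ≤ k
  · have hle : μ / (1 - μ) * θ l ≤ μ / (1 - μ) * θ k :=
      mul_le_mul_of_nonneg_left (hθmono.monotone h) hc.le
    simp only [h, hle, if_true]
    ring
  · have hnle : ¬ μ / (1 - μ) * θ l ≤ μ / (1 - μ) * θ k :=
      not_le.mpr (mul_lt_mul_of_pos_left (hθmono (not_le.mp h)) hc)
    simp [h, hnle]

lemma R_eq_mul_of_eq_div {x y : Fin n → ℝ} {j : Fin n} {F : ℝ}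
    (hF : F = ∑ k ∈ univ.filter (fun k => j ≤ k), x k) (hF0 : F ≠ 0)
    (hy : ∀ k, j ≤ k → y k = x k / F) :
    R n θ μ x j = F * R n θ μ y j := by
  have hsum : ∑ k ∈ univ.filter (fun k => j ≤ k), y k = 1 := by
    rw [sum_congr rfl fun k hk => hy k (mem_filter.mp hk).2, ← sum_div, ← hF, div_self hF0]
  unfold R
  rw [hsum, ← hF]
  ring

lemma R_pos {w : Fin n → ℝ} {m : Fin n} (hθpos : ∀ l, 0 < θ l) (hμ0 : 0 < μ) (hμ1 : μ < 1)
    (hw : ∀ k, 0 ≤ w k) (hm : 0 < w m) : 0 < R n θ μ w m := by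
  have hfactor : (1 - μ) * (μ / (1 - μ) * θ m) = μ * θ m := by
    field_simp [(by linarith : (1 : ℝ) - μ ≠ 0)]
  have hsum : 0 < ∑ k ∈ univ.filter (fun k => m ≤ k), w k :=
    hm.trans_le (single_le_sum (fun k _ => hw k) (by simp))
  unfold R
  rw [hfactor]
  have := hθpos m
  positivity

end Revenue

lemma eq_mul_add_mul_of_split {n : ℕ} {x y z : Fin n → ℝ} {j : Fin n} {F : ℝ}
    (hF0 : F ≠ 0) (hF1 : 1 - F ≠ 0)
    (hy : ∀ k, y k = if j ≤ k then x k / F else 0)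
    (hz : ∀ k, z k = if k < j then x k / (1 - F) else 0) (k : Fin n) :
    F * y k + (1 - F) * z k = x k := by
  rw [hy, hz]
  by_cases h : j ≤ k
  · rw [if_pos h, if_neg (not_lt.mpr h)]
    field_simp
    ring
  · rw [if_neg h, if_pos (not_le.mp h)]
    field_simp
    ring

theorem stmt14_general (n : ℕ) (θ : Fin n → ℝ) (μ : ℝ) (x y z : Fin n → ℝ)
    (j jmin : Fin n) (F : ℝ)
    (hθpos : ∀ l, 0 < θ l) (hθmono : StrictMono θ) (hμ0 : 0 < μ) (hμ1 : μ < 1)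
    (hx : ∀ k, 0 ≤ x k)
    (hjmin : 0 < x jmin) (hlt : jmin < j)
    (hF : F = ∑ k ∈ Finset.univ.filter (fun k => j ≤ k), x k)
    (hF0 : 0 < F) (hF1 : F < 1)
    (hy : ∀ k, y k = if j ≤ k then x k / F else 0)
    (hz : ∀ k, z k = if k < j then x k / (1 - F) else 0) :
    (∀ k, F * y k + (1 - F) * z k = x k) ∧
      ∀ l, OptIdx n θ μ z l →
        USone n θ μ (μ / (1 - μ) * θ j) x <
          F * USone n θ μ (μ / (1 - μ) * θ j) y
            + (1 - F) * USone n θ μ (μ / (1 - μ) * θ l) z := by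
  have h1F : 0 < 1 - F := by linarith
  refine ⟨eq_mul_add_mul_of_split hF0.ne' h1F.ne' hy hz, fun l hl => ?_⟩
  simp only [USone_eq_R hμ0 hμ1 hθmono]
  have hxy : R n θ μ x j = F * R n θ μ y j :=
    R_eq_mul_of_eq_div hF hF0.ne' fun k hk => by rw [hy, if_pos hk]
  have hz_nonneg : ∀ k, 0 ≤ z k := fun k => by
    rw [hz]
    split_ifs
    exacts [div_nonneg (hx k) h1F.le, le_rfl]
  have hz_jmin : 0 < z jmin := by
    rw [hz, if_pos hlt]
    exact div_pos hjmin h1F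
  have hRz : 0 < R n θ μ z l :=
    (R_pos hθpos hμ0 hμ1 hz_nonneg hz_jmin).trans_le (hl.1 jmin)
  nlinarith

/-- In the splitting construction, replacing posterior `x` by `y` and `z`
with weights `F_j(x)` and `1-F_j(x)` preserves Bayes-plausibility, and strictly increases
the sender's expected utility:
`F·U_S(p*(y);y) + (1-F)·U_S(p*(z);z) > U_S(p*(x);x)`. -/
theorem stmt14 (n : ℕ) (θ : Fin n → ℝ) (μ : ℝ) (x y z : Fin n → ℝ)
    (j jmin : Fin n) (F : ℝ)
    (hθpos : ∀ l, 0 < θ l) (hθmono : StrictMono θ) (hμ0 : 0 < μ) (hμ1 : μ < 1)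
    (hx : ∀ k, 0 ≤ x k) (hx1 : ∑ k, x k = 1)
    (hjmin : 0 < x jmin) (hjminle : ∀ k, 0 < x k → jmin ≤ k) (hlt : jmin < j)
    (hF : F = ∑ k ∈ Finset.univ.filter (fun k => j ≤ k), x k)
    (hF0 : 0 < F) (hF1 : F < 1)
    (hy : ∀ k, y k = if j ≤ k then x k / F else 0)
    (hz : ∀ k, z k = if k < j then x k / (1 - F) else 0)
    (hopt : OptIdx n θ μ x j) :
    (∀ k, F * y k + (1 - F) * z k = x k) ∧
      ∀ l, OptIdx n θ μ z l →
        USone n θ μ (μ / (1 - μ) * θ j) x <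
          F * USone n θ μ (μ / (1 - μ) * θ j) y
            + (1 - F) * USone n θ μ (μ / (1 - μ) * θ l) z :=
  stmt14_general n θ μ x y z j jmin F hθpos hθmono hμ0 hμ1 hx hjmin hlt hF hF0 hF1 hy hz
end

section
/- In the splitting construction, every user's utility weakly increases: users of types θ_k with k ≥ j get the same utility in y as in x (since p*(y) = p*(x)), and users of types θ_k with k < j get utility 0 in x and nonnegative utility in z, hence U_P weakly increases. -/
open Finset

/-- Utility of a user of type `θ k` facing lying probability `p`. -/
noncomputable def UR (n : ℕ) (θ : Fin n → ℝ) (μ : ℝ) (k : Fin n) (p : ℝ) : ℝ :=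
  if p ≤ μ / (1 - μ) * θ k then μ * θ k - (1 - μ) * p else 0

/-- In the splitting construction, every user's utility weakly increases:
the aggregate utility of types `≥ j` in `y` (facing `p*(y) = p*(x) = p_j`) equals their
aggregate utility in `x`; types `< j` get utility `0` in `x` and nonnegative utility in `z`;
hence the platform utility weakly increases. -/
theorem stmt15 (n : ℕ) (θ : Fin n → ℝ) (μ : ℝ) (x y z : Fin n → ℝ)
    (j jmin : Fin n) (F : ℝ)
    (hθpos : ∀ l, 0 < θ l) (hθmono : StrictMono θ) (hμ0 : 0 < μ) (hμ1 : μ < 1)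
    (hx : ∀ k, 0 ≤ x k) (hx1 : ∑ k, x k = 1)
    (hjmin : 0 < x jmin) (hjminle : ∀ k, 0 < x k → jmin ≤ k) (hlt : jmin < j)
    (hF : F = ∑ k ∈ Finset.univ.filter (fun k => j ≤ k), x k)
    (hF0 : 0 < F) (hF1 : F < 1)
    (hy : ∀ k, y k = if j ≤ k then x k / F else 0)
    (hz : ∀ k, z k = if k < j then x k / (1 - F) else 0)
    (hopt : OptIdx n θ μ x j) :
    (F * ∑ k, y k * UR n θ μ k (μ / (1 - μ) * θ j)
        = ∑ k ∈ Finset.univ.filter (fun k => j ≤ k), x k * UR n θ μ k (μ / (1 - μ) * θ j)) ∧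
      (∀ k, k < j → UR n θ μ k (μ / (1 - μ) * θ j) = 0) ∧
      (∀ l, OptIdx n θ μ z l →
        (∀ k, 0 ≤ UR n θ μ k (μ / (1 - μ) * θ l)) ∧
          ∑ k, x k * UR n θ μ k (μ / (1 - μ) * θ j) ≤
            F * (∑ k, y k * UR n θ μ k (μ / (1 - μ) * θ j))
              + (1 - F) * (∑ k, z k * UR n θ μ k (μ / (1 - μ) * θ l))) := by

  have h1μ : (0:ℝ) < 1 - μ := by linarith
  have hc : 0 < μ / (1 - μ) := div_pos hμ0 h1μ
  have part2 : ∀ k : Fin n, k < j → UR n θ μ k (μ / (1 - μ) * θ j) = 0 := by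
    intro k hk
    unfold UR
    rw [if_neg]
    intro h
    have hθ : θ k < θ j := hθmono hk
    have := le_of_mul_le_mul_left h hc
    linarith
  have part1 : F * ∑ k, y k * UR n θ μ k (μ / (1 - μ) * θ j)
      = ∑ k ∈ Finset.univ.filter (fun k => j ≤ k), x k * UR n θ μ k (μ / (1 - μ) * θ j) := by
    rw [Finset.mul_sum, Finset.sum_filter]
    apply Finset.sum_congr rfl
    intro k _
    rw [hy k]
    by_cases h : j ≤ k
    · simp only [h, if_true]
      field_simp
    · simp [h]
  refine ⟨part1, part2, ?_⟩
  intro l hl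
  have nonneg : ∀ k, 0 ≤ UR n θ μ k (μ / (1 - μ) * θ l) := by
    intro k
    unfold UR
    split
    · rename_i h
      have hlk : θ l ≤ θ k := le_of_mul_le_mul_left h hc
      have key : (1 - μ) * (μ / (1 - μ) * θ l) = μ * θ l := by
        field_simp
      rw [key]
      nlinarith
    · exact le_refl 0
  refine ⟨nonneg, ?_⟩
  have hsplit : ∑ k, x k * UR n θ μ k (μ / (1 - μ) * θ j)
      = ∑ k ∈ Finset.univ.filter (fun k => j ≤ k), x k * UR n θ μ k (μ / (1 - μ) * θ j) := by
    rw [Finset.sum_filter]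
    apply Finset.sum_congr rfl
    intro k _
    by_cases h : j ≤ k
    · simp [h]
    · simp only [h, if_false]
      rw [part2 k (lt_of_not_ge h), mul_zero]
  rw [hsplit, ← part1]
  have hznn : 0 ≤ (1 - F) * ∑ k, z k * UR n θ μ k (μ / (1 - μ) * θ l) := by
    apply mul_nonneg (by linarith)
    apply Finset.sum_nonneg
    intro k _
    apply mul_nonneg _ (nonneg k)
    rw [hz k]
    split
    · exact div_nonneg (hx k) (by linarith)
    · exact le_refl 0
  linarith
end
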